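/- Let G be a connected hypergraph with adjacency matrix A_G, spectral radius ρ, and positive principal eigenvector X. Suppose e = {u, v_1, ..., v_{k−1}} is a pendant edge of G with k ≥ 2, i.e. deg(u) ≥ 2 and deg(v_i) = 1 for all 1 ≤ i ≤ k−1. Then X_{v_1} = X_{v_2} = ··· = X_{v_{k−1}} = X_u / ((k−1)ρ − (k−2)), and this common value is strictly less than X_u. -/

import Mathlib

open Matrix BigOperators

/-- A hypergraph on vertex set `Fin n`: a set of edges, each an at-least-2-element
vertex subset. -/
structure HGraph (n : ℕ) where
  edges : Finset (Finset (Fin n))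
  two_le_card : ∀ e ∈ edges, 2 ≤ e.card

namespace HGraph

variable {n : ℕ}

/-- The adjacency matrix `(A_G)_{ij} = Σ_{e ∋ i,j} 1/(|e|-1)` for `i ≠ j`, zero diagonal. -/
noncomputable def adjMat (G : HGraph n) : Matrix (Fin n) (Fin n) ℝ :=
  fun i j => if i = j then 0 else
    ∑ e ∈ G.edges.filter (fun e => i ∈ e ∧ j ∈ e), (1 : ℝ) / ((e.card : ℝ) - 1)

/-- `G` is `k`-uniform if every edge has exactly `k` vertices. -/
def IsUniform (G : HGraph n) (k : ℕ) : Prop := ∀ e ∈ G.edges, e.card = k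

/-- Degree of a vertex: the number of edges containing it. -/
def degree (G : HGraph n) (v : Fin n) : ℕ := (G.edges.filter (fun e => v ∈ e)).card

/-- Connectivity: any two vertices are linked by a walk of overlapping edges. -/
def Connected (G : HGraph n) : Prop :=
  ∀ i j : Fin n, Relation.ReflTransGen (fun a b => ∃ e ∈ G.edges, a ∈ e ∧ b ∈ e) i j

/-- Every vertex lies in some edge (no isolated vertices, so the order is `n`). -/
def Covers (G : HGraph n) : Prop := ∀ v : Fin n, ∃ e ∈ G.edges, v ∈ e

/-- A pendant edge attached at `v`: all its vertices other than `v` have degree 1. -/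
def IsPendantAt (G : HGraph n) (e : Finset (Fin n)) (v : Fin n) : Prop :=
  e ∈ G.edges ∧ v ∈ e ∧ ∀ u ∈ e, u ≠ v → G.degree u = 1

/-- `v, e` (indices modulo `q`) form a hypercycle of length `q ≥ 2` in `G`:
distinct vertices, distinct edges, `v i, v (i+1) ∈ e i`, consecutive edges meet
exactly in the shared vertex (when `q ≥ 3`), non-consecutive edges are disjoint. -/
def IsCycle (G : HGraph n) (q : ℕ) (v : ℕ → Fin n) (e : ℕ → Finset (Fin n)) : Prop :=
  2 ≤ q ∧
  (∀ i < q, ∀ j < q, v i = v j → i = j) ∧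
  (∀ i < q, ∀ j < q, e i = e j → i = j) ∧
  (∀ i < q, e i ∈ G.edges) ∧
  (∀ i < q, v i ∈ e i ∧ v ((i + 1) % q) ∈ e i) ∧
  (3 ≤ q → ∀ i < q, e i ∩ e ((i + 1) % q) = {v ((i + 1) % q)}) ∧
  (∀ i < q, ∀ j < q, i ≠ j → (i + 1) % q ≠ j → (j + 1) % q ≠ i → e i ∩ e j = ∅)

/-- `G` contains a hypercycle. -/
def HasCycle (G : HGraph n) : Prop :=
  ∃ (q : ℕ) (v : ℕ → Fin n) (e : ℕ → Finset (Fin n)), IsCycle G q v e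

end HGraph

open HGraph

/-- `G` is a `k`-uniform unicyclic hypergraph of order `n`: connected with
`n - 1 = (k-1)m - 1`. -/
def IsUnicyclic (k : ℕ) {n : ℕ} (G : HGraph n) : Prop :=
  G.IsUniform k ∧ G.Connected ∧
    (n : ℤ) - 1 = ((k : ℤ) - 1) * (G.edges.card : ℤ) - 1

/-- Isomorphism of two hypergraphs on the same vertex set. -/
def Isomorphic {n : ℕ} (G H : HGraph n) : Prop :=
  ∃ σ : Equiv.Perm (Fin n), ∀ e : Finset (Fin n), e ∈ G.edges ↔ e.image σ ∈ H.edges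

/-- The permutation matrix of `σ`, so that `(P_σ X) i = X (σ⁻¹ i)`. -/
def permMat {n : ℕ} (σ : Equiv.Perm (Fin n)) : Matrix (Fin n) (Fin n) ℝ :=
  fun i j => if σ j = i then 1 else 0

/-- `σ` is an automorphism of `G`. -/
def IsAuto {n : ℕ} (G : HGraph n) (σ : Equiv.Perm (Fin n)) : Prop :=
  ∀ e : Finset (Fin n), e ∈ G.edges ↔ e.image σ ∈ G.edges

/-- The spectral radius of a real matrix: the largest modulus of a (real) eigenvalue. -/
noncomputable def specRad {n : ℕ} (A : Matrix (Fin n) (Fin n) ℝ) : ℝ :=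
  ⨆ μ : spectrum ℝ A, |(μ : ℝ)|

/-- The hypergraph `U*`: a 2-hypercycle on `v₁, v₂` (two edges meeting exactly in
`{v₁, v₂}`) with all remaining edges pendant edges attached at `v₁`. -/
def IsUstar (k : ℕ) {n : ℕ} (G : HGraph n) : Prop :=
  G.IsUniform k ∧ G.Covers ∧
  ∃ v1 v2 : Fin n, v1 ≠ v2 ∧ ∃ e1 ∈ G.edges, ∃ e2 ∈ G.edges, e1 ≠ e2 ∧
    e1 ∩ e2 = {v1, v2} ∧
    ∀ e ∈ G.edges, e ≠ e1 → e ≠ e2 → G.IsPendantAt e v1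

/-- The hypergraph `F`: a 2-hypercycle on `v₁, v₂`, one pendant edge at `v₂`,
all remaining edges pendant at `v₁`. -/
def IsF (k : ℕ) {n : ℕ} (G : HGraph n) : Prop :=
  G.IsUniform k ∧ G.Covers ∧
  ∃ v1 v2 : Fin n, v1 ≠ v2 ∧ ∃ e1 ∈ G.edges, ∃ e2 ∈ G.edges, e1 ≠ e2 ∧
    e1 ∩ e2 = {v1, v2} ∧
    ∃ f ∈ G.edges, f ≠ e1 ∧ f ≠ e2 ∧ G.IsPendantAt f v2 ∧
      ∀ e ∈ G.edges, e ≠ e1 → e ≠ e2 → e ≠ f → G.IsPendantAt e v1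

/-- The hypergraph `F₁`: a 2-hypercycle on `v₁, v₂`, all remaining edges pendant at
a vertex `η ∈ e₂ \ {v₁, v₂}`. -/
def IsF1 (k : ℕ) {n : ℕ} (G : HGraph n) : Prop :=
  G.IsUniform k ∧ G.Covers ∧
  ∃ v1 v2 η : Fin n, v1 ≠ v2 ∧ ∃ e1 ∈ G.edges, ∃ e2 ∈ G.edges, e1 ≠ e2 ∧
    e1 ∩ e2 = {v1, v2} ∧ η ∈ e2 ∧ η ≠ v1 ∧ η ≠ v2 ∧
    ∀ e ∈ G.edges, e ≠ e1 → e ≠ e2 → G.IsPendantAt e η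

/-- The hypergraph `F₂`: a 2-hypercycle on `v₁, v₂`, one pendant edge at `v₁`, all
remaining edges pendant at a vertex `η ∈ e₂ \ {v₁, v₂}`. -/
def IsF2 (k : ℕ) {n : ℕ} (G : HGraph n) : Prop :=
  G.IsUniform k ∧ G.Covers ∧
  ∃ v1 v2 η : Fin n, v1 ≠ v2 ∧ ∃ e1 ∈ G.edges, ∃ e2 ∈ G.edges, e1 ≠ e2 ∧
    e1 ∩ e2 = {v1, v2} ∧ η ∈ e2 ∧ η ≠ v1 ∧ η ≠ v2 ∧
    ∃ f ∈ G.edges, f ≠ e1 ∧ f ≠ e2 ∧ G.IsPendantAt f v1 ∧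
      ∀ e ∈ G.edges, e ≠ e1 → e ≠ e2 → e ≠ f → G.IsPendantAt e η

/-- The hypergraph `F₃`: a 2-hypercycle on `v₁, v₂`, one pendant edge at a vertex
`η ∈ e₂ \ {v₁, v₂}`, all remaining edges pendant at `v₁`. -/
def IsF3 (k : ℕ) {n : ℕ} (G : HGraph n) : Prop :=
  G.IsUniform k ∧ G.Covers ∧
  ∃ v1 v2 η : Fin n, v1 ≠ v2 ∧ ∃ e1 ∈ G.edges, ∃ e2 ∈ G.edges, e1 ≠ e2 ∧
    e1 ∩ e2 = {v1, v2} ∧ η ∈ e2 ∧ η ≠ v1 ∧ η ≠ v2 ∧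
    ∃ f ∈ G.edges, f ≠ e1 ∧ f ≠ e2 ∧ G.IsPendantAt f η ∧
      ∀ e ∈ G.edges, e ≠ e1 → e ≠ e2 → e ≠ f → G.IsPendantAt e v1

/-- The hypergraph `F_(R;S;T)`: a 2-hypercycle on `v₁, v₂` with every remaining edge
a pendant edge attached at some vertex of `e₁ ∪ e₂`. -/
def IsFRST (k : ℕ) {n : ℕ} (G : HGraph n) : Prop :=
  G.IsUniform k ∧ G.Covers ∧
  ∃ v1 v2 : Fin n, v1 ≠ v2 ∧ ∃ e1 ∈ G.edges, ∃ e2 ∈ G.edges, e1 ≠ e2 ∧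
    e1 ∩ e2 = {v1, v2} ∧
    ∀ e ∈ G.edges, e ≠ e1 → e ≠ e2 → ∃ w ∈ e1 ∪ e2, G.IsPendantAt e w

section PendantAux

variable {n : ℕ}

lemma adj_nonneg (G : HGraph n) (i j : Fin n) : 0 ≤ G.adjMat i j := by
  unfold HGraph.adjMat
  split
  · exact le_refl _
  · refine Finset.sum_nonneg fun g hg => ?_
    have h2 : 2 ≤ g.card := G.two_le_card g (Finset.mem_of_mem_filter _ hg)
    have : (2:ℝ) ≤ (g.card : ℝ) := by exact_mod_cast h2
    exact div_nonneg zero_le_one (by linarith)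

lemma adj_ge (G : HGraph n) {i j : Fin n} (hij : i ≠ j) {g : Finset (Fin n)}
    (hg : g ∈ G.edges) (hi : i ∈ g) (hj : j ∈ g) :
    1 / ((g.card : ℝ) - 1) ≤ G.adjMat i j := by
  unfold HGraph.adjMat
  rw [if_neg hij]
  refine Finset.single_le_sum (f := fun g : Finset (Fin n) => (1:ℝ) / ((g.card : ℝ) - 1)) ?_ ?_
  · intro g' hg'
    have h2 : 2 ≤ g'.card := G.two_le_card g' (Finset.mem_of_mem_filter _ hg')
    have : (2:ℝ) ≤ (g'.card : ℝ) := by exact_mod_cast h2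
    exact div_nonneg zero_le_one (by linarith)
  · simp [Finset.mem_filter, hg, hi, hj]

lemma pendant_row (G : HGraph n) {v : Fin n} {e : Finset (Fin n)} (he : e ∈ G.edges)
    (hv : v ∈ e) (hdeg : G.degree v = 1) (X : Fin n → ℝ) :
    (G.adjMat *ᵥ X) v = (1 / ((e.card : ℝ) - 1)) * ∑ j ∈ e.erase v, X j := by
  have hfilter : G.edges.filter (fun g => v ∈ g) = {e} := by
    obtain ⟨a, ha⟩ := Finset.card_eq_one.mp hdeg
    have hme : e ∈ G.edges.filter (fun g => v ∈ g) := by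
      simp [Finset.mem_filter, he, hv]
    rw [ha] at hme ⊢
    simp only [Finset.mem_singleton] at hme
    rw [hme]
  have key : ∀ j, G.adjMat v j * X j =
      if j ∈ e.erase v then (1 / ((e.card : ℝ) - 1)) * X j else 0 := by
    intro j
    by_cases hj : j = v
    · subst hj; simp [HGraph.adjMat]
    · have hne : v ≠ j := fun h => hj h.symm
      have hfilt2 : G.edges.filter (fun g => v ∈ g ∧ j ∈ g)
          = Finset.filter (fun g => j ∈ g) {e} := by
        rw [← hfilter, Finset.filter_filter]
      by_cases hje : j ∈ e
      · have : j ∈ e.erase v := Finset.mem_erase.mpr ⟨hj, hje⟩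
        simp only [this, if_true]
        unfold HGraph.adjMat
        rw [if_neg hne, hfilt2]
        simp [Finset.filter_singleton, hje]
      · have : j ∉ e.erase v := fun h => hje (Finset.mem_of_mem_erase h)
        simp only [this, if_false]
        unfold HGraph.adjMat
        rw [if_neg hne, hfilt2]
        simp [Finset.filter_singleton, hje]
  have : (G.adjMat *ᵥ X) v = ∑ j, G.adjMat v j * X j := by
    simp [Matrix.mulVec, dotProduct]
  rw [this]
  simp only [key]
  rw [Finset.sum_ite_mem, Finset.univ_inter, Finset.mul_sum]

end PendantAux

/-- pendant edge lemma. If `e = {u, v₁, …, v_{k-1}}` is a pendant edge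
with `deg u ≥ 2` and `deg vᵢ = 1`, then `X vᵢ = X u / ((k-1)ρ - (k-2)) < X u`. -/
theorem stmt4 {n k : ℕ} (hk : 2 ≤ k) (G : HGraph n) (hconn : G.Connected)
    (X : Fin n → ℝ) (hpos : ∀ i, 0 < X i) (hunit : ∑ i, X i ^ 2 = 1)
    (hX : G.adjMat *ᵥ X = specRad G.adjMat • X)
    (e : Finset (Fin n)) (he : e ∈ G.edges) (hcard : e.card = k)
    (u : Fin n) (hu : u ∈ e) (hdegu : 2 ≤ G.degree u)
    (hpend : ∀ v ∈ e, v ≠ u → G.degree v = 1) :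
    ∀ v ∈ e, v ≠ u →
      X v = X u / (((k : ℝ) - 1) * specRad G.adjMat - ((k : ℝ) - 2)) ∧
      X v < X u := by
  set ρ := specRad G.adjMat with hρdef
  have hk2 : (2:ℝ) ≤ (k:ℝ) := by exact_mod_cast hk
  have hk1 : (1:ℝ) ≤ (k:ℝ) - 1 := by linarith
  have hk1ne : ((k:ℝ) - 1) ≠ 0 := by linarith
  -- eigen equation at pendant vertices
  have heig : ∀ v ∈ e, v ≠ u → ((k:ℝ) - 1) * (ρ * X v) = ∑ j ∈ e.erase v, X j := by
    intro v hv hvu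
    have h1 := pendant_row G he hv (hpend v hv hvu) X
    rw [hcard] at h1
    have h2 : (G.adjMat *ᵥ X) v = ρ * X v := by rw [hX]; simp
    rw [h2] at h1
    rw [h1]
    field_simp
  -- sum over erase v equals total minus X v
  have hT : ∀ v ∈ e, ∑ j ∈ e.erase v, X j + X v = ∑ j ∈ e, X j :=
    fun v hv => Finset.sum_erase_add e X hv
  -- all pendant values are equal
  have hrho_pos : ∀ v ∈ e, v ≠ u → 0 < ρ := by
    intro v hv hvu
    have h1 := heig v hv hvu
    have hXu_le : X u ≤ ∑ j ∈ e.erase v, X j := by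
      refine Finset.single_le_sum (fun i _ => (hpos i).le) ?_
      exact Finset.mem_erase.mpr ⟨fun h => hvu h.symm, hu⟩
    have h3 : 0 < ((k:ℝ) - 1) * (ρ * X v) := by linarith [hpos u]
    by_contra hc
    push_neg at hc
    have h4 : ρ * X v ≤ 0 := mul_nonpos_of_nonpos_of_nonneg hc (hpos v).le
    have h5 : ((k:ℝ) - 1) * (ρ * X v) ≤ 0 :=
      mul_nonpos_of_nonneg_of_nonpos (by linarith) h4
    linarith
  have heq : ∀ v ∈ e, v ≠ u → ∀ w ∈ e, w ≠ u → X v = X w := by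
    intro v hv hvu w hw hwu
    have h1 := heig v hv hvu
    have h2 := heig w hw hwu
    have hv1 := hT v hv
    have hw1 := hT w hw
    have hρ := hrho_pos v hv hvu
    have hc1 : (0:ℝ) < ((k:ℝ) - 1) * ρ + 1 := by nlinarith
    refine mul_left_cancel₀ (ne_of_gt hc1) ?_
    linear_combination h1 + hv1 - h2 - hw1
  -- main per-vertex identity: ((k-1)ρ - (k-2)) * X v = X u
  have hmain : ∀ v ∈ e, v ≠ u → (((k:ℝ) - 1) * ρ - ((k:ℝ) - 2)) * X v = X u := by
    intro v hv hvu
    have h1 := heig v hv hvu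
    have hue : u ∈ e.erase v := Finset.mem_erase.mpr ⟨fun h => hvu h.symm, hu⟩
    have hsplit : X u + ∑ j ∈ (e.erase v).erase u, X j = ∑ j ∈ e.erase v, X j :=
      Finset.add_sum_erase _ X hue
    have hconst : ∑ j ∈ (e.erase v).erase u, X j = ((k:ℝ) - 2) * X v := by
      have hall : ∀ j ∈ (e.erase v).erase u, X j = X v := by
        intro j hj
        have hju : j ≠ u := (Finset.mem_erase.mp hj).1
        have hje : j ∈ e := Finset.mem_of_mem_erase (Finset.mem_of_mem_erase hj)
        exact heq j hje hju v hv hvu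
      rw [Finset.sum_congr rfl hall, Finset.sum_const, nsmul_eq_mul]
      have hc : ((e.erase v).erase u).card = k - 2 := by
        rw [Finset.card_erase_of_mem hue, Finset.card_erase_of_mem hv, hcard]
        omega
      rw [hc]
      have : ((k - 2 : ℕ) : ℝ) = (k:ℝ) - 2 := by
        have : 2 ≤ k := hk
        push_cast [Nat.cast_sub this]; ring
      rw [this]
    rw [← hsplit, hconst] at h1
    linarith
  -- find a second edge at u, and a vertex w of it outside e
  obtain ⟨f, hf, hfe⟩ := Finset.exists_mem_ne
    (lt_of_lt_of_le one_lt_two hdegu) e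
  have hfE : f ∈ G.edges := (Finset.mem_filter.mp hf).1
  have huf : u ∈ f := (Finset.mem_filter.mp hf).2
  obtain ⟨w, hwf, hwu⟩ := Finset.exists_mem_ne
    (lt_of_lt_of_le one_lt_two (G.two_le_card f hfE)) u
  have hwe : w ∉ e := by
    intro hwe
    have hdw := hpend w hwe hwu
    have : 2 ≤ (G.edges.filter (fun g => w ∈ g)).card := by
      have hs : ({e, f} : Finset (Finset (Fin n))) ⊆ G.edges.filter (fun g => w ∈ g) := by
        intro g hg
        rcases Finset.mem_insert.mp hg with h | h
        · subst h; exact Finset.mem_filter.mpr ⟨he, hwe⟩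
        · rw [Finset.mem_singleton] at h; subst h; exact Finset.mem_filter.mpr ⟨hfE, hwf⟩
      calc 2 = ({e, f} : Finset (Finset (Fin n))).card := by
              rw [Finset.card_insert_of_notMem (by simpa using (hfe.symm : e ≠ f).symm ∘ Eq.symm ∘ id), Finset.card_singleton]
           _ ≤ _ := Finset.card_le_card hs
    rw [HGraph.degree] at hdw
    omega
  intro v hv hvu
  have hXv := hpos v
  have hXu := hpos u
  have hρpos := hrho_pos v hv hvu
  set d : ℝ := ((k:ℝ) - 1) * ρ - ((k:ℝ) - 2) with hd
  have hdXv : d * X v = X u := hmain v hv hvu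
  have hdpos : 0 < d := by
    rcases lt_trichotomy d 0 with h | h | h
    · nlinarith
    · rw [h] at hdXv; nlinarith
    · exact h
  -- strict inequality: ρ * X u > X v
  have hstrict : X v < ρ * X u := by
    have hAu : (G.adjMat *ᵥ X) u = ρ * X u := by rw [hX]; simp
    have hexp : (G.adjMat *ᵥ X) u = ∑ j, G.adjMat u j * X j := by
      simp [Matrix.mulVec, dotProduct]
    have hwne : w ∉ e.erase u := fun h => hwe (Finset.mem_of_mem_erase h)
    have hsub : ∑ j ∈ insert w (e.erase u), G.adjMat u j * X j ≤ ∑ j, G.adjMat u j * X j := by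
      refine Finset.sum_le_sum_of_subset_of_nonneg (Finset.subset_univ _) ?_
      intro i _ _
      exact mul_nonneg (adj_nonneg G u i) (hpos i).le
    have hins : ∑ j ∈ insert w (e.erase u), G.adjMat u j * X j
        = G.adjMat u w * X w + ∑ j ∈ e.erase u, G.adjMat u j * X j :=
      Finset.sum_insert hwne
    have hAuw : 0 < G.adjMat u w * X w := by
      have h1 : (0:ℝ) < 1 / ((f.card : ℝ) - 1) := by
        have : (2:ℝ) ≤ (f.card : ℝ) := by exact_mod_cast G.two_le_card f hfE
        exact div_pos one_pos (by linarith)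
      have h2 := adj_ge G (fun h => hwu h.symm) hfE huf hwf
      exact mul_pos (lt_of_lt_of_le h1 h2) (hpos w)
    have hEsum : X v ≤ ∑ j ∈ e.erase u, G.adjMat u j * X j := by
      have hbound : ∀ j ∈ e.erase u, (1 / ((k:ℝ) - 1)) * X j ≤ G.adjMat u j * X j := by
        intro j hj
        have hjne : j ≠ u := (Finset.mem_erase.mp hj).1
        have hje : j ∈ e := Finset.mem_of_mem_erase hj
        have := adj_ge G (fun h => hjne h.symm) he hu hje
        rw [hcard] at this
        exact mul_le_mul_of_nonneg_right this (hpos j).le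
      have hsum1 : ∑ j ∈ e.erase u, (1 / ((k:ℝ) - 1)) * X j
          = (1 / ((k:ℝ) - 1)) * ∑ j ∈ e.erase u, X j := (Finset.mul_sum _ _ _).symm
      have hsum2 : ∑ j ∈ e.erase u, X j = ((k:ℝ) - 1) * X v := by
        have hall : ∀ j ∈ e.erase u, X j = X v := fun j hj =>
          heq j (Finset.mem_of_mem_erase hj) (Finset.mem_erase.mp hj).1 v hv hvu
        rw [Finset.sum_congr rfl hall, Finset.sum_const, nsmul_eq_mul,
          Finset.card_erase_of_mem hu, hcard]
        have : ((k - 1 : ℕ) : ℝ) = (k:ℝ) - 1 := by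
          push_cast [Nat.cast_sub (le_trans one_le_two hk)]; ring
        rw [this]
      calc X v = ∑ j ∈ e.erase u, (1 / ((k:ℝ) - 1)) * X j := by
              rw [hsum1, hsum2]; field_simp
        _ ≤ _ := Finset.sum_le_sum hbound
    calc X v ≤ ∑ j ∈ e.erase u, G.adjMat u j * X j := hEsum
      _ < G.adjMat u w * X w + ∑ j ∈ e.erase u, G.adjMat u j * X j := by linarith
      _ = ∑ j ∈ insert w (e.erase u), G.adjMat u j * X j := hins.symm
      _ ≤ ∑ j, G.adjMat u j * X j := hsub
      _ = ρ * X u := by rw [← hexp, hAu]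
  -- conclude d > 1
  have hρd : 1 < ρ * d := by
    have h6 : X v < ρ * (d * X v) := by rw [hdXv]; exact hstrict
    nlinarith
  have hd1 : 1 < d := by
    by_contra hc
    push_neg at hc
    have h2 : ρ * d ≤ ρ := by nlinarith
    have h3 : 1 < ρ := lt_of_lt_of_le hρd h2
    have h4 : ((k:ℝ) - 1) * 1 < ((k:ℝ) - 1) * ρ :=
      mul_lt_mul_of_pos_left h3 (by linarith)
    have : 1 < d := by rw [hd]; linarith
    linarith
  have hveq : X v = X u / d := by
    rw [eq_div_iff (ne_of_gt hdpos), mul_comm]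
    exact hdXv
  exact ⟨hveq, hveq ▸ div_lt_self hXu hd1⟩
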